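/- arXiv:2405.08234 — 2 statements merged into one kernel-verified Lean document; each statement's English description precedes it below -/
import Mathlib

section
/- Let $I$ be a finite set with an adjacency relation given by a multiset of unordered pairs (a graph with possible multiple edges). Given nonnegative integers $w_i, w'_i, v_i$ for $i\in I$, define $\bar v_i = \min\big(v_i,\ w_i,\ w'_i + \sum_{h: i-j}\min(v_j,w_j)\big)$, where the sum runs over edges $h$ incident to $i$ with other endpoint $j$. Then for every $i\in I$ we have $w'_i \ge \bar v_i - \sum_{h: i-j}\bar v_j$. -/
/-- Sum over edges of the multiset `Ω` incident to vertex `i`, of `f` applied to the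
other endpoint (counted with multiplicity). -/
def incSum {n : ℕ} (Ω : Multiset (Fin n × Fin n)) (i : Fin n) (f : Fin n → ℤ) : ℤ :=
  (Ω.map fun e => if e.1 = i then f e.2 else if e.2 = i then f e.1 else 0).sum

lemma incSum_nonneg {n : ℕ} (Ω : Multiset (Fin n × Fin n)) (i : Fin n) (f : Fin n → ℤ)
    (hf : ∀ j, 0 ≤ f j) : 0 ≤ incSum Ω i f := by
  apply Multiset.sum_nonneg
  intro x hx
  simp only [Multiset.mem_map] at hx
  obtain ⟨e, _, rfl⟩ := hx
  split_ifs <;> first | exact hf _ | exact le_refl 0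

lemma le_incSum {n : ℕ} (Ω : Multiset (Fin n × Fin n)) (i j : Fin n) (f : Fin n → ℤ)
    (hf : ∀ k, 0 ≤ f k) (e : Fin n × Fin n) (he : e ∈ Ω)
    (hterm : (if e.1 = i then f e.2 else if e.2 = i then f e.1 else 0) = f j) :
    f j ≤ incSum Ω i f := by
  rw [incSum, ← Multiset.cons_erase he, Multiset.map_cons, Multiset.sum_cons, hterm]
  have h0 : 0 ≤ incSum (Ω.erase e) i f := incSum_nonneg _ _ _ hf
  rw [incSum] at h0
  linarith

/-- Key computation of Lemma 3.4: with
`v̄ᵢ = min(vᵢ, wᵢ, w'ᵢ + ∑_{h : i-j} min(vⱼ, wⱼ))`, one has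
`w'ᵢ ≥ v̄ᵢ - ∑_{h : i-j} v̄ⱼ` for every vertex `i`. -/
theorem stmt0 {n : ℕ} (Ω : Multiset (Fin n × Fin n))
    (hΩ : ∀ e ∈ Ω, e.1 ≠ e.2)
    (w w' v : Fin n → ℤ)
    (hw : ∀ i, 0 ≤ w i) (hw' : ∀ i, 0 ≤ w' i) (hv : ∀ i, 0 ≤ v i)
    (vbar : Fin n → ℤ)
    (hvbar : ∀ i, vbar i =
      min (v i) (min (w i) (w' i + incSum Ω i (fun j => min (v j) (w j))))) :
    ∀ i, vbar i - incSum Ω i vbar ≤ w' i := by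
  have hmw : ∀ k, 0 ≤ min (v k) (w k) := fun k => le_min (hv k) (hw k)
  have hvb0 : ∀ k, 0 ≤ vbar k := by
    intro k
    rw [hvbar k]
    exact le_min (hv k) (le_min (hw k)
      (add_nonneg (hw' k) (incSum_nonneg _ _ _ hmw)))
  have hvb_le : ∀ k, vbar k ≤ min (v k) (w k) := by
    intro k
    rw [hvbar k]
    exact le_min (min_le_left _ _)
      (le_trans (min_le_right _ _) (min_le_left _ _))
  -- key dichotomy for a neighbor j of i
  have key : ∀ (i j : Fin n) (e : Fin n × Fin n), e ∈ Ω →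
      ((e.1 = i ∧ e.2 = j) ∨ (e.1 = j ∧ e.2 = i)) →
      vbar j ≠ min (v j) (w j) → vbar i ≤ vbar j := by
    intro i j e he hij hne
    have hij_ne : i ≠ j := by
      rcases hij with ⟨h1, h2⟩ | ⟨h1, h2⟩ <;>
        · intro h; apply hΩ e he; rw [h1, h2]; simp [h]
    have hj : vbar j = w' j + incSum Ω j (fun k => min (v k) (w k)) := by
      have h := hvbar j
      rw [← min_assoc] at h
      rcases min_cases (min (v j) (w j)) (w' j + incSum Ω j (fun k => min (v k) (w k)))
        with ⟨hc, _⟩ | ⟨hc, _⟩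
      · exact absurd (h.trans hc) hne
      · exact h.trans hc
    have hsum : min (v i) (w i) ≤ incSum Ω j (fun k => min (v k) (w k)) := by
      apply le_incSum Ω j i _ hmw e he
      rcases hij with ⟨h1, h2⟩ | ⟨h1, h2⟩
      · rw [h1, h2, if_neg hij_ne, if_pos rfl]
      · rw [h1, h2, if_pos rfl]
    calc vbar i ≤ min (v i) (w i) := hvb_le i
    _ ≤ w' j + incSum Ω j (fun k => min (v k) (w k)) := by
        have := hw' j; linarith
    _ = vbar j := hj.symm
  intro i
  by_cases hP : ∀ e ∈ Ω, (if e.1 = i then vbar e.2 else if e.2 = i then vbar e.1 else 0)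
      = (if e.1 = i then min (v e.2) (w e.2) else if e.2 = i then min (v e.1) (w e.1) else 0)
  · have heq : incSum Ω i vbar = incSum Ω i (fun j => min (v j) (w j)) := by
      unfold incSum
      congr 1
      exact Multiset.map_congr rfl hP
    have h1 : vbar i ≤ w' i + incSum Ω i (fun j => min (v j) (w j)) := by
      rw [hvbar i]
      exact le_trans (min_le_right _ _) (min_le_right _ _)
    rw [heq]
    linarith
  · push_neg at hP
    obtain ⟨e, he, hne⟩ := hP
    by_cases h1 : e.1 = i
    · have hne2 : vbar e.2 ≠ min (v e.2) (w e.2) := by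
        simpa [h1] using hne
      have hle : vbar i ≤ vbar e.2 := key i e.2 e he (Or.inl ⟨h1, rfl⟩) hne2
      have hterm : (if e.1 = i then vbar e.2 else if e.2 = i then vbar e.1 else 0)
          = vbar e.2 := by simp [h1]
      have := le_incSum Ω i e.2 vbar hvb0 e he hterm
      have := hw' i
      linarith
    · have h2 : e.2 = i := by
        by_contra h2
        simp [h1, h2] at hne
      have hne1 : vbar e.1 ≠ min (v e.1) (w e.1) := by
        simpa [h1, h2] using hne
      have hle : vbar i ≤ vbar e.1 := key i e.1 e he (Or.inr ⟨rfl, h2⟩) hne1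
      have hterm : (if e.1 = i then vbar e.2 else if e.2 = i then vbar e.1 else 0)
          = vbar e.1 := by simp [h1, h2]
      have := le_incSum Ω i e.1 vbar hvb0 e he hterm
      have := hw' i
      linarith
end

section
/- Suppose the quiver is bipartite with sinks $I_0$ and sources $I_1$, and $(v,w)$ satisfies the nonemptiness condition: $0\le v_\alpha\le w_\alpha$ for all $\alpha\in I_0$ and $0\le v_\beta\le w'_\beta + \sum_{h: s(h)=\beta} v_{t(h)}$ for all $\beta\in I_1$. Then for every source $\beta\in I_1$, the vector $\bar v$ from Lemma 3.4 satisfies $\bar v_\beta = \min(v_\beta, w_\beta)$. -/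
/-- Sum over arrows `h` of `Ω` with source `β`, of `f` applied to the target
(counted with multiplicity). Arrows are pairs `(s(h), t(h))`. -/
def outSum {n : ℕ} (Ω : Multiset (Fin n × Fin n)) (β : Fin n) (f : Fin n → ℤ) : ℤ :=
  (Ω.map fun h => if h.1 = β then f h.2 else 0).sum

/-- Bipartite case of Lemma 3.4: `src i = true` marks sources (`I₁`), `src i = false`
marks sinks (`I₀`); every arrow goes from a source to a sink.  Under the nonemptiness
condition `0 ≤ v_α ≤ w_α` for sinks and `0 ≤ v_β ≤ w'_β + ∑_{h:s(h)=β} v_{t(h)}` for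
sources, the vector `v̄` of Lemma 3.4 satisfies `v̄_β = min(v_β, w_β)` for each source. -/
theorem stmt3 {n : ℕ} (src : Fin n → Bool) (Ω : Multiset (Fin n × Fin n))
    (hΩ : ∀ h ∈ Ω, src h.1 = true ∧ src h.2 = false)
    (w w' v : Fin n → ℤ)
    (hw : ∀ i, 0 ≤ w i) (hw' : ∀ i, 0 ≤ w' i) (hv : ∀ i, 0 ≤ v i)
    (hsink : ∀ α, src α = false → v α ≤ w α)
    (hsrc : ∀ β, src β = true → v β ≤ w' β + outSum Ω β v)
    (vbar : Fin n → ℤ)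
    (hvbar : ∀ i, vbar i =
      min (v i) (min (w i) (w' i + incSum Ω i (fun j => min (v j) (w j))))) :
    ∀ β, src β = true → vbar β = min (v β) (w β) := by
  intro β hβ
  have hinc : incSum Ω β (fun j => min (v j) (w j)) = outSum Ω β v := by
    unfold incSum outSum
    congr 1
    apply Multiset.map_congr rfl
    intro e he
    obtain ⟨h1, h2⟩ := hΩ e he
    by_cases hc : e.1 = β
    · simp only [hc, if_true]
      have : v e.2 ≤ w e.2 := hsink e.2 h2
      simp [min_eq_left this]
    · have hc2 : e.2 ≠ β := by
        intro h; rw [h, hβ] at h2; exact absurd h2 (by simp)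
      simp [hc, hc2]
  have hle : v β ≤ w' β + incSum Ω β (fun j => min (v j) (w j)) := by
    rw [hinc]; exact hsrc β hβ
  rw [hvbar β]
  rw [min_comm (w β), ← min_assoc, min_eq_left hle]
end
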